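/- Let p ≥ 1, let Φ : Ω → ℝⁿ be a Λ_p-regular map on an open set Ω ⊆ ℝ^m, and let A ⊆ Ω be a closed quasi-convex subset of Ω such that cl(A) and ∂Ω are simply separated. (Then Φ|A is Lipschitz and extends continuously to Φ̄ : cl(A) → ℝⁿ.) Let B ⊆ ℝⁿ be locally closed with Φ(A) ⊆ B, set K := Φ̄(cl(A) \ A), and let r : B → [0, ∞) satisfy r(y) ≤ C'·d(y, K) for all y ∈ B, for some constant C' > 0. Let F = (F^κ)_{|κ|≤p} be a C^p-Whitney field on B such that for each b ∈ K and each |κ| ≤ p, F^κ(y) = o(r(y)^{p−|κ|}) as B ∋ y → b. For x ∈ A define the polynomial G(x, X) := Σ_{|σ|≤p} (1/σ!) G^σ(x) X^σ as the truncation to degree ≤ p in X of Σ_{|κ|≤p} (1/κ!) F^κ(Φ(x)) · ( Σ_{1≤|γ|≤p} (1/γ!) D^γΦ(x) X^γ )^κ (the composition F ∘ TΦ of Whitney fields). Then for every a ∈ cl(A) \ A and every |σ| ≤ p: G^σ(x) = o( r(Φ(x))^{p−|σ|} ) as A ∋ x → a. -/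

import Mathlib

open scoped BigOperators NNReal

open Classical in
/-- Distance to a set, with the convention `d(x, ∅) = 1`. -/
noncomputable def d1 {X : Type*} [PseudoMetricSpace X] (x : X) (S : Set X) : ℝ :=
  if S.Nonempty then Metric.infDist x S else 1

/-- First-order partial derivative in direction `i`. -/
noncomputable def pd {k : ℕ} {F : Type*} [NormedAddCommGroup F] [NormedSpace ℝ F]
    (i : Fin k) (f : (Fin k → ℝ) → F) : (Fin k → ℝ) → F :=
  fun x => fderiv ℝ f x (Pi.single i 1)

/-- Iterated partial derivative `D^α` for a multi-index `α`. -/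
noncomputable def mD {k : ℕ} {F : Type*} [NormedAddCommGroup F] [NormedSpace ℝ F]
    (α : Fin k → ℕ) (f : (Fin k → ℝ) → F) : (Fin k → ℝ) → F :=
  (List.finRange k).foldr (fun i g => (pd i)^[α i] g) f

/-- `|α| = α₁ + ⋯ + α_k`. -/
def deg {k : ℕ} (α : Fin k → ℕ) : ℕ := ∑ i, α i

/-- `α! = α₁! ⋯ α_k!`. -/
def mfact {k : ℕ} (α : Fin k → ℕ) : ℕ := ∏ i, Nat.factorial (α i)

/-- The (finite) set of multi-indices `α : Fin n → ℕ` with `|α| ≤ k`. -/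
noncomputable def multiIdx (n k : ℕ) : Finset (Fin n → ℕ) :=
  ((Finset.univ : Finset (Fin n → Fin (k + 1))).image
    (fun f i => (f i : ℕ))).filter (fun α => deg α ≤ k)

/-- A `C^p`-Whitney field on `A ⊆ ℝⁿ`: a family of continuous functions `F^α`, `|α| ≤ p`,
satisfying the Whitney compatibility condition
`F^β(a) - ∑_{|α| ≤ p - |β|} (1/α!) F^(α+β)(b) (a-b)^α = o(|a-b|^(p-|β|))` as `a, b → c` in `A`. -/
def IsWhitneyField (n p : ℕ) (A : Set (Fin n → ℝ))
    (F : (Fin n → ℕ) → (Fin n → ℝ) → ℝ) : Prop :=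
  (∀ α : Fin n → ℕ, deg α ≤ p → ContinuousOn (F α) A) ∧
  ∀ c ∈ A, ∀ β : Fin n → ℕ, deg β ≤ p → ∀ ε > 0, ∃ δ > 0,
    ∀ a ∈ A, ∀ b ∈ A, dist a c < δ → dist b c < δ →
      |F β a - ∑ α ∈ multiIdx n (p - deg β),
          (1 / (mfact α : ℝ)) * F (α + β) b * ∏ i, (a i - b i) ^ α i|
        ≤ ε * dist a b ^ (p - deg β)

/-- `A` is quasi-convex with constant `M`: any two points of `A` are joined by a
rectifiable arc in `A` of length (total variation) at most `M` times their distance. -/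
def QuasiConvexWith {X : Type*} [PseudoMetricSpace X] (M : ℝ) (A : Set X) : Prop :=
  ∀ a ∈ A, ∀ b ∈ A, ∃ γ : ℝ → X,
    ContinuousOn γ (Set.Icc 0 1) ∧ γ 0 = a ∧ γ 1 = b ∧
    (∀ t ∈ Set.Icc (0 : ℝ) 1, γ t ∈ A) ∧
    eVariationOn γ (Set.Icc 0 1) ≤ ENNReal.ofReal (M * dist a b)

/-- A map `f : Ω → F` on an open `Ω ⊆ ℝ^k` is `Λ_p`-regular if it is of class `C^p` and
`|D^α f(x)| ≤ C / d(x, ∂Ω)^(|α|-1)` for `1 ≤ |α| ≤ p`, with the convention `d(x, ∅) = 1`. -/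
def LambdaRegular (p : ℕ) {k : ℕ} {F : Type*} [NormedAddCommGroup F] [NormedSpace ℝ F]
    (Ω : Set (Fin k → ℝ)) (f : (Fin k → ℝ) → F) : Prop :=
  ContDiffOn ℝ (p : ℕ∞) f Ω ∧
  ∃ C > 0, ∀ x ∈ Ω, ∀ α : Fin k → ℕ, 1 ≤ deg α → deg α ≤ p →
    ‖mD α f x‖ ≤ C / d1 x (frontier Ω) ^ (deg α - 1)

/-- A multi-index `Fin n → ℕ` as a finitely supported function. -/
noncomputable def toFinsupp {n : ℕ} (α : Fin n → ℕ) : Fin n →₀ ℕ :=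
  Finsupp.equivFunOnFinite.symm α

/-- Truncation `π_p`: keep only the monomials of total degree `≤ p`. -/
noncomputable def truncP {n : ℕ} (p : ℕ) (P : MvPolynomial (Fin n) ℝ) :
    MvPolynomial (Fin n) ℝ :=
  ∑ s ∈ P.support.filter (fun s => (∑ i, s i) ≤ p), MvPolynomial.monomial s (P.coeff s)

/-- The polynomial of the composed field `F ∘ TΦ` at `x`: the truncation to degree `≤ p` of
`∑_{|κ| ≤ p} (1/κ!) F^κ(Φ(x)) · (∑_{1 ≤ |γ| ≤ p} (1/γ!) D^γ Φ(x) X^γ)^κ`. -/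
noncomputable def compTaylorPoly {m n : ℕ} (p : ℕ)
    (F : (Fin n → ℕ) → (Fin n → ℝ) → ℝ) (Φ : (Fin m → ℝ) → (Fin n → ℝ))
    (x : Fin m → ℝ) : MvPolynomial (Fin m) ℝ :=
  truncP p (∑ κ ∈ multiIdx n p,
    MvPolynomial.C ((1 / (mfact κ : ℝ)) * F κ (Φ x)) *
      ∏ j : Fin n,
        (∑ γ ∈ (multiIdx m p).filter (fun γ => 1 ≤ deg γ),
          MvPolynomial.monomial (toFinsupp γ) ((1 / (mfact γ : ℝ)) * mD γ Φ x j)) ^ κ j)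


section AuxLemmas

-- basic lemmas
lemma coe_toFinsupp {n : ℕ} (α : Fin n → ℕ) : ⇑(toFinsupp α) = α :=
  Finsupp.equivFunOnFinite.apply_symm_apply α

lemma sum_toFinsupp {n : ℕ} (α : Fin n → ℕ) : (∑ i, (toFinsupp α) i) = deg α := by
  simp [coe_toFinsupp, deg]

lemma le_deg {k : ℕ} (α : Fin k → ℕ) (i : Fin k) : α i ≤ deg α :=
  Finset.single_le_sum (fun j _ => Nat.zero_le _) (Finset.mem_univ i)

lemma mem_multiIdx {n k : ℕ} {α : Fin n → ℕ} : α ∈ multiIdx n k ↔ deg α ≤ k := by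
  constructor
  · intro h; exact (Finset.mem_filter.1 h).2
  · intro h
    refine Finset.mem_filter.2 ⟨Finset.mem_image.2 ⟨fun i => ⟨α i, Nat.lt_succ_of_le ((le_deg α i).trans h)⟩, Finset.mem_univ _, rfl⟩, h⟩

lemma one_le_mfact {k : ℕ} (α : Fin k → ℕ) : 1 ≤ mfact α :=
  Nat.one_le_iff_ne_zero.2 (Finset.prod_ne_zero_iff.2 fun i _ => Nat.factorial_ne_zero _)

lemma coeff_truncP {n p : ℕ} (P : MvPolynomial (Fin n) ℝ) (s : Fin n →₀ ℕ)
    (hs : (∑ i, s i) ≤ p) : (truncP p P).coeff s = P.coeff s := by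
  classical
  rw [truncP, MvPolynomial.coeff_sum]
  simp only [MvPolynomial.coeff_monomial]
  rw [Finset.sum_ite_eq' _ s (fun s' => P.coeff s')]
  by_cases h : s ∈ P.support.filter (fun s => (∑ i, s i) ≤ p)
  · rw [if_pos h]
  · rw [if_neg h]
    by_contra hne
    exact h (Finset.mem_filter.2 ⟨MvPolynomial.mem_support_iff.2 fun h0 => hne h0.symm, hs⟩)

lemma coeff_monomial_sum {m : ℕ} (S : Finset (Fin m → ℕ)) (v : (Fin m → ℕ) → ℝ)
    (s : Fin m →₀ ℕ) :
    MvPolynomial.coeff s (∑ γ ∈ S, MvPolynomial.monomial (toFinsupp γ) (v γ)) =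
      if ⇑s ∈ S then v ⇑s else 0 := by
  classical
  rw [MvPolynomial.coeff_sum]
  have : ∀ γ ∈ S, MvPolynomial.coeff s (MvPolynomial.monomial (toFinsupp γ) (v γ)) =
      if γ = ⇑s then v γ else 0 := by
    intro γ _
    rw [MvPolynomial.coeff_monomial]
    congr 1
    simp only [toFinsupp, eq_iff_iff]
    rw [Equiv.symm_apply_eq]
    exact ⟨fun h => h ▸ rfl, fun h => h ▸ rfl⟩
  rw [Finset.sum_congr rfl this, Finset.sum_ite_eq' S (⇑s) v]

/-- degree bound / flatness predicate for coefficient estimates -/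
def GoodP {m : ℕ} (p : ℕ) (t : ℝ) (q : ℕ) (D : ℝ) (P : MvPolynomial (Fin m) ℝ) : Prop :=
  (∀ s : Fin m →₀ ℕ, (∑ i, s i) < q → P.coeff s = 0) ∧
  (∀ s : Fin m →₀ ℕ, (∑ i, s i) ≤ p → |P.coeff s| ≤ D * t ^ ((q : ℤ) - (∑ i, s i)))

lemma goodP_mono {m p q : ℕ} {t D D' : ℝ} {P : MvPolynomial (Fin m) ℝ}
    (ht : 0 < t) (hDD : D ≤ D') (h : GoodP p t q D P) : GoodP p t q D' P := by
  refine ⟨h.1, fun s hs => (h.2 s hs).trans ?_⟩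
  exact mul_le_mul_of_nonneg_right hDD (le_of_lt (zpow_pos ht _))

lemma goodP_C {m p : ℕ} {t c D : ℝ} (ht : 0 < t) (hc : |c| ≤ D) :
    GoodP (m := m) p t 0 D (MvPolynomial.C c) := by
  constructor
  · intro s hs; exact absurd hs (Nat.not_lt_zero _)
  · intro s _
    rw [MvPolynomial.coeff_C]
    by_cases h : (0 : Fin m →₀ ℕ) = s
    · subst h
      simp only [if_pos rfl]
      simpa using hc
    · rw [if_neg h, abs_zero]
      exact mul_nonneg ((abs_nonneg c).trans hc) (le_of_lt (zpow_pos ht _))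

lemma sum_add_finsupp {m : ℕ} (a b : Fin m →₀ ℕ) :
    (∑ i, (a + b) i) = (∑ i, a i) + (∑ i, b i) := by
  simp [Finsupp.add_apply, Finset.sum_add_distrib]

lemma card_antidiagonal_le {m p : ℕ} (s : Fin m →₀ ℕ) (hs : (∑ i, s i) ≤ p) :
    (Finset.HasAntidiagonal.antidiagonal s).card ≤ 2 ^ p := by
  classical
  have h1 : (Finset.HasAntidiagonal.antidiagonal s).card ≤ (Finset.Iic s).card := by
    apply Finset.card_le_card_of_injOn (fun x => x.1)
    · intro x hx
      rw [Finset.mem_coe, Finset.HasAntidiagonal.mem_antidiagonal] at hx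
      exact Finset.mem_Iic.2 (hx ▸ self_le_add_right x.1 x.2)
    · intro x hx y hy hxy
      rw [Finset.mem_coe, Finset.HasAntidiagonal.mem_antidiagonal] at hx hy
      simp only at hxy
      have : x.2 = y.2 := by
        have h := hx.trans hy.symm
        rwa [hxy, add_right_inj] at h
      exact Prod.ext hxy this
  have h2 : (Finset.Iic s).card = ∏ i ∈ s.support, (s i + 1) := by
    rw [Finsupp.card_Iic]
    congr 1
    ext i
    rw [Nat.card_Iic]
  have h3 : (∏ i ∈ s.support, (s i + 1)) ≤ ∏ i ∈ s.support, 2 ^ (s i) :=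
    Finset.prod_le_prod' (fun i _ => Nat.succ_le_of_lt (Nat.lt_two_pow_self))
  have h4 : (∏ i ∈ s.support, 2 ^ (s i)) = 2 ^ (∑ i ∈ s.support, s i) :=
    Finset.prod_pow_eq_pow_sum _ _ _
  have h5 : (∑ i ∈ s.support, s i) = ∑ i, s i :=
    Finset.sum_subset (Finset.subset_univ _) (fun i _ hi => Finsupp.notMem_support_iff.1 hi)
  calc (Finset.HasAntidiagonal.antidiagonal s).card ≤ ∏ i ∈ s.support, (s i + 1) := h1.trans_eq h2
    _ ≤ 2 ^ (∑ i ∈ s.support, s i) := h3.trans_eq h4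
    _ ≤ 2 ^ p := Nat.pow_le_pow_right (by norm_num) (h5 ▸ hs)

lemma goodP_mul {m p q q' : ℕ} {t D D' : ℝ} {P Q : MvPolynomial (Fin m) ℝ}
    (ht : 0 < t) (hD : 0 ≤ D) (hD' : 0 ≤ D')
    (hP : GoodP p t q D P) (hQ : GoodP p t q' D' Q) :
    GoodP p t (q + q') (2 ^ p * (D * D')) (P * Q) := by
  classical
  constructor
  · intro s hs
    rw [MvPolynomial.coeff_mul]
    apply Finset.sum_eq_zero
    intro x hx
    rw [Finset.HasAntidiagonal.mem_antidiagonal] at hx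
    have hsum : (∑ i, x.1 i) + (∑ i, x.2 i) = ∑ i, s i := by
      rw [← sum_add_finsupp, hx]
    by_cases h1 : (∑ i, x.1 i) < q
    · rw [hP.1 x.1 h1, zero_mul]
    · have : (∑ i, x.2 i) < q' := by omega
      rw [hQ.1 x.2 this, mul_zero]
  · intro s hs
    rw [MvPolynomial.coeff_mul]
    refine (Finset.abs_sum_le_sum_abs _ _).trans ?_
    have hbound : ∀ x ∈ Finset.HasAntidiagonal.antidiagonal s,
        |P.coeff x.1 * Q.coeff x.2| ≤ (D * D') * t ^ (((q : ℤ) + q') - (∑ i, s i)) := by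
      intro x hx
      rw [Finset.HasAntidiagonal.mem_antidiagonal] at hx
      have hsum : (∑ i, x.1 i) + (∑ i, x.2 i) = ∑ i, s i := by
        rw [← sum_add_finsupp, hx]
      have h1 : (∑ i, x.1 i) ≤ p := le_trans (by omega) hs
      have h2 : (∑ i, x.2 i) ≤ p := le_trans (by omega) hs
      rw [abs_mul]
      calc |P.coeff x.1| * |Q.coeff x.2|
          ≤ (D * t ^ ((q : ℤ) - (∑ i, x.1 i))) * (D' * t ^ ((q' : ℤ) - (∑ i, x.2 i))) :=
            mul_le_mul (hP.2 x.1 h1) (hQ.2 x.2 h2) (abs_nonneg _)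
              (mul_nonneg hD (le_of_lt (zpow_pos ht _)))
        _ = (D * D') * t ^ (((q : ℤ) + q') - (∑ i, s i)) := by
            rw [mul_mul_mul_comm, ← zpow_add₀ (ne_of_gt ht)]
            congr 2
            push_cast [← hsum]
            ring
    refine (Finset.sum_le_sum hbound).trans ?_
    rw [Finset.sum_const, nsmul_eq_mul]
    have hcard : ((Finset.HasAntidiagonal.antidiagonal s).card : ℝ) ≤ 2 ^ p := by
      exact_mod_cast (card_antidiagonal_le s hs).trans_eq (by push_cast; ring_nf)
    calc ((Finset.HasAntidiagonal.antidiagonal s).card : ℝ) * ((D * D') * t ^ (((q : ℤ) + q') - (∑ i, s i)))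
        ≤ 2 ^ p * ((D * D') * t ^ (((q : ℤ) + q') - (∑ i, s i))) := by
          apply mul_le_mul_of_nonneg_right hcard
          exact mul_nonneg (mul_nonneg hD hD') (le_of_lt (zpow_pos ht _))
      _ = 2 ^ p * (D * D') * t ^ (((q + q' : ℕ) : ℤ) - (∑ i, s i)) := by
          push_cast; ring

lemma goodP_one {m p : ℕ} {t : ℝ} (ht : 0 < t) : GoodP (m := m) p t 0 1 1 := by
  have := goodP_C (m := m) (p := p) (t := t) (c := (1:ℝ)) (D := 1) ht (by norm_num)
  simpa using this

lemma goodP_pow {m p q : ℕ} {t D : ℝ} {P : MvPolynomial (Fin m) ℝ}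
    (ht : 0 < t) (hD : 0 ≤ D) (hP : GoodP p t q D P) (k : ℕ) :
    GoodP p t (k * q) ((2 ^ p * D) ^ k) (P ^ k) := by
  induction k with
  | zero => simpa using goodP_one ht
  | succ k ih =>
    have h := goodP_mul ht (by positivity) hD ih hP
    have hq : k * q + q = (k + 1) * q := by ring
    have he : (2:ℝ) ^ p * ((2 ^ p * D) ^ k * D) = (2 ^ p * D) ^ k * (2 ^ p * D) := by ring
    rw [pow_succ, ← hq, ← he]
    exact h

lemma goodP_prod {m p : ℕ} {t : ℝ} (ht : 0 < t) {ι : Type*} (s : Finset ι)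
    (Q : ι → MvPolynomial (Fin m) ℝ) (q : ι → ℕ) (D : ι → ℝ)
    (hD : ∀ j, 0 ≤ D j) (h : ∀ j ∈ s, GoodP p t (q j) (D j) (Q j)) :
    GoodP p t (∑ j ∈ s, q j) ((2 ^ p) ^ s.card * ∏ j ∈ s, D j) (∏ j ∈ s, Q j) := by
  classical
  induction s using Finset.cons_induction with
  | empty => simpa using goodP_one ht
  | cons a s ha ih =>
    rw [Finset.prod_cons, Finset.sum_cons, Finset.card_cons, Finset.prod_cons]
    have hgood := goodP_mul ht (hD a)
      (mul_nonneg (by positivity) (Finset.prod_nonneg fun j _ => hD j)) (h a (Finset.mem_cons_self a s)) (ih (fun j hj => h j (Finset.mem_cons_of_mem hj)))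
    have he : (2:ℝ) ^ p * (D a * ((2 ^ p) ^ s.card * ∏ j ∈ s, D j)) =
        (2 ^ p) ^ (s.card + 1) * (D a * ∏ j ∈ s, D j) := by ring
    rw [← he]
    exact hgood

lemma foldr_single {k : ℕ} {F : Type*} [NormedAddCommGroup F] [NormedSpace ℝ F]
    (i : Fin k) (f : (Fin k → ℝ) → F) :
    ∀ l : List (Fin k), l.Nodup →
      List.foldr (fun j g => (pd j)^[(Pi.single i 1 : Fin k → ℕ) j] g) f l = if i ∈ l then pd i f else f := by
  intro l
  induction l with
  | nil => simp
  | cons a tl ih =>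
    intro hnd
    rw [List.foldr_cons, ih (List.Nodup.of_cons hnd)]
    by_cases hai : a = i
    · subst hai
      have hni : a ∉ tl := (List.nodup_cons.1 hnd).1
      rw [if_neg hni, if_pos List.mem_cons_self]
      have h1 : (Pi.single a 1 : Fin k → ℕ) a = 1 := Pi.single_eq_same a 1
      rw [h1]
      simp
    · have h0 : (Pi.single i 1 : Fin k → ℕ) a = 0 := Pi.single_eq_of_ne hai 1
      rw [h0]
      simp only [Function.iterate_zero, id_eq]
      by_cases him : i ∈ tl
      · rw [if_pos him, if_pos (List.mem_cons_of_mem a him)]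
      · rw [if_neg him, if_neg (by simp only [List.mem_cons]; rintro (h | h); exact hai h.symm; exact him h)]

lemma mD_single {k : ℕ} {F : Type*} [NormedAddCommGroup F] [NormedSpace ℝ F]
    (i : Fin k) (f : (Fin k → ℝ) → F) : mD (Pi.single i 1) f = pd i f := by
  rw [mD, foldr_single i f _ (List.nodup_finRange k), if_pos (List.mem_finRange i)]

lemma deg_single {k : ℕ} (i : Fin k) : deg (Pi.single i 1) = 1 := by
  simp [deg, Finset.sum_pi_single']

lemma pi_sum_single {m : ℕ} (v : Fin m → ℝ) : v = ∑ i, v i • (Pi.single i 1 : Fin m → ℝ) := by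
  ext j
  simp [Pi.single_apply]

lemma fderiv_opNorm_le {m n : ℕ} {Φ : (Fin m → ℝ) → (Fin n → ℝ)} {x : Fin m → ℝ} {C : ℝ}
    (hC : 0 ≤ C)
    (h : ∀ i : Fin m, ‖fderiv ℝ Φ x (Pi.single i 1)‖ ≤ C) :
    ‖fderiv ℝ Φ x‖ ≤ m * C := by
  apply ContinuousLinearMap.opNorm_le_bound _ (by positivity)
  intro v
  calc ‖fderiv ℝ Φ x v‖ = ‖∑ i, v i • fderiv ℝ Φ x (Pi.single i 1)‖ := by
        conv_lhs => rw [pi_sum_single v]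
        rw [map_sum]
        simp only [map_smul]
    _ ≤ ∑ i, ‖v i • fderiv ℝ Φ x (Pi.single i 1)‖ := norm_sum_le _ _
    _ ≤ ∑ _i : Fin m, ‖v‖ * C := by
        apply Finset.sum_le_sum
        intro i _
        rw [norm_smul]
        exact mul_le_mul (norm_le_pi_norm v i) (h i) (norm_nonneg _) (norm_nonneg _)
    _ = m * C * ‖v‖ := by
        rw [Finset.sum_const, Finset.card_univ, Fintype.card_fin, nsmul_eq_mul]
        ring

lemma dist_images_le_of_curve (m n : ℕ) {Ω : Set (Fin m → ℝ)} (hΩ : IsOpen Ω)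
    {Φ : (Fin m → ℝ) → (Fin n → ℝ)} (hdiff : ∀ x ∈ Ω, DifferentiableAt ℝ Φ x)
    {L : ℝ} (hL : 0 ≤ L) (hf : ∀ x ∈ Ω, ‖fderiv ℝ Φ x‖ ≤ L)
    {γ : ℝ → Fin m → ℝ} (hγc : ContinuousOn γ (Set.Icc 0 1))
    (hγΩ : ∀ t ∈ Set.Icc (0:ℝ) 1, γ t ∈ Ω)
    {V : ℝ} (hV : 0 ≤ V) (hvar : eVariationOn γ (Set.Icc 0 1) ≤ ENNReal.ofReal V) :
    dist (Φ (γ 0)) (Φ (γ 1)) ≤ L * V := by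
  -- compact image inside the open set
  have hkc : IsCompact (γ '' Set.Icc 0 1) := (isCompact_Icc).image_of_continuousOn hγc
  have hksub : γ '' Set.Icc 0 1 ⊆ Ω := by
    rintro _ ⟨t, ht, rfl⟩; exact hγΩ t ht
  obtain ⟨ρ, hρ, hthick⟩ := hkc.exists_thickening_subset_open hΩ hksub
  -- uniform continuity
  have huc := (isCompact_Icc (a := (0:ℝ)) (b := 1)).uniformContinuousOn_of_continuous hγc
  rw [Metric.uniformContinuousOn_iff] at huc
  obtain ⟨δ, hδ, hucδ⟩ := huc ρ hρ
  obtain ⟨N, hN⟩ := exists_nat_one_div_lt (hδ : (0:ℝ) < δ)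
  set Nn := N + 1 with hNn
  have hNpos : 0 < (Nn : ℝ) := by positivity
  -- partition
  set u : ℕ → ℝ := fun i => ((min i Nn : ℕ) : ℝ) / Nn with hu
  have humem : ∀ i, u i ∈ Set.Icc (0:ℝ) 1 := by
    intro i
    constructor
    · positivity
    · rw [div_le_one hNpos]
      exact_mod_cast Nat.min_le_right i Nn
  have humono : Monotone u := by
    intro i j hij
    have hmm : (min i Nn : ℕ) ≤ min j Nn := by omega
    have hc : ((min i Nn : ℕ) : ℝ) ≤ ((min j Nn : ℕ) : ℝ) := by exact_mod_cast hmm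
    exact div_le_div_of_nonneg_right hc hNpos.le |>.trans (le_refl _)

  have hu0 : u 0 = 0 := by simp [hu]
  have hu1 : u Nn = 1 := by
    simp only [hu, min_self]
    field_simp
  -- consecutive distances small
  have hstep : ∀ i : ℕ, dist (u (i+1)) (u i) < δ := by
    intro i
    rw [Real.dist_eq, hu]
    have h1 : (min i Nn : ℕ) ≤ min (i+1) Nn := by omega
    have h2 : (min (i+1) Nn : ℕ) ≤ min i Nn + 1 := by omega
    have : ((min (i+1) Nn : ℕ) : ℝ) / Nn - ((min i Nn : ℕ) : ℝ) / Nn ≤ 1 / Nn := by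
      rw [div_sub_div_same]
      gcongr
      rw [sub_le_iff_le_add]
      exact_mod_cast (by omega : min (i+1) Nn ≤ 1 + min i Nn)
    have hnn : (0:ℝ) ≤ ((min (i+1) Nn : ℕ) : ℝ) / Nn - ((min i Nn : ℕ) : ℝ) / Nn := by
      rw [sub_nonneg]
      exact div_le_div_of_nonneg_right (by exact_mod_cast h1) hNpos.le
    rw [abs_of_nonneg hnn]
    calc ((min (i+1) Nn : ℕ) : ℝ) / Nn - ((min i Nn : ℕ) : ℝ) / Nn ≤ 1 / Nn := this
      _ < δ := by
          have : (Nn : ℝ) = (N : ℝ) + 1 := by push_cast [hNn]; ring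
          rw [this]
          exact hN
  -- piecewise Lipschitz estimate
  have hseg : ∀ i : ℕ, dist (Φ (γ (u (i+1)))) (Φ (γ (u i))) ≤ L * dist (γ (u (i+1))) (γ (u i)) := by
    intro i
    have hmem1 := humem i
    have hmem2 := humem (i+1)
    have hballsub : Metric.ball (γ (u i)) ρ ⊆ Ω := by
      refine subset_trans ?_ hthick
      intro y hy
      rw [Metric.mem_thickening_iff]
      exact ⟨γ (u i), ⟨u i, hmem1, rfl⟩, hy⟩
    have hc : γ (u (i+1)) ∈ Metric.ball (γ (u i)) ρ := by
      rw [Metric.mem_ball]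
      exact hucδ _ hmem2 _ hmem1 (hstep i)
    have hcc : γ (u i) ∈ Metric.ball (γ (u i)) ρ := Metric.mem_ball_self hρ
    have hest := Convex.norm_image_sub_le_of_norm_fderiv_le
      (fun y hy => hdiff y (hballsub hy)) (fun y hy => hf y (hballsub hy))
      (convex_ball _ _) hcc hc
    rw [dist_eq_norm, dist_eq_norm]
    exact hest
  -- sum of distances bounded by the variation
  have hsum : ∑ i ∈ Finset.range Nn, dist (γ (u (i+1))) (γ (u i)) ≤ V := by
    have h1 := eVariationOn.sum_le (f := γ) (n := Nn) humono humem
    have h2 : (ENNReal.ofReal (∑ i ∈ Finset.range Nn, dist (γ (u (i+1))) (γ (u i))))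
        ≤ ENNReal.ofReal V := by
      rw [ENNReal.ofReal_sum_of_nonneg (fun i _ => dist_nonneg)]
      refine le_trans (le_of_eq ?_) (h1.trans hvar)
      apply Finset.sum_congr rfl
      intro i _
      rw [edist_dist]
    exact (ENNReal.ofReal_le_ofReal_iff hV).1 h2
  calc dist (Φ (γ 0)) (Φ (γ 1)) = dist (Φ (γ (u 0))) (Φ (γ (u Nn))) := by rw [hu0, hu1]
    _ ≤ ∑ i ∈ Finset.range Nn, dist (Φ (γ (u i))) (Φ (γ (u (i+1)))) :=
        dist_le_range_sum_dist (fun i => Φ (γ (u i))) Nn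
    _ ≤ ∑ i ∈ Finset.range Nn, L * dist (γ (u (i+1))) (γ (u i)) := by
        apply Finset.sum_le_sum
        intro i _
        rw [dist_comm]
        exact hseg i
    _ = L * ∑ i ∈ Finset.range Nn, dist (γ (u (i+1))) (γ (u i)) := by rw [Finset.mul_sum]
    _ ≤ L * V := mul_le_mul_of_nonneg_left hsum hL

end AuxLemmas


section MoreAux

/-- the inner polynomial of `compTaylorPoly` -/
noncomputable def Qpoly (m n p : ℕ) (Φ : (Fin m → ℝ) → (Fin n → ℝ)) (x : Fin m → ℝ)
    (j : Fin n) : MvPolynomial (Fin m) ℝ :=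
  ∑ γ ∈ (multiIdx m p).filter (fun γ => 1 ≤ deg γ),
    MvPolynomial.monomial (toFinsupp γ) ((1 / (mfact γ : ℝ)) * mD γ Φ x j)

lemma coeff_compTaylorPoly {m n : ℕ} (p : ℕ) (F : (Fin n → ℕ) → (Fin n → ℝ) → ℝ)
    (Φ : (Fin m → ℝ) → (Fin n → ℝ)) (x : Fin m → ℝ) (s : Fin m →₀ ℕ)
    (hs : (∑ i, s i) ≤ p) :
    MvPolynomial.coeff s (compTaylorPoly p F Φ x)
      = ∑ κ ∈ multiIdx n p, (1 / (mfact κ : ℝ)) * F κ (Φ x)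
          * MvPolynomial.coeff s (∏ j, Qpoly m n p Φ x j ^ κ j) := by
  have : compTaylorPoly p F Φ x = truncP p (∑ κ ∈ multiIdx n p,
      MvPolynomial.C ((1 / (mfact κ : ℝ)) * F κ (Φ x)) * ∏ j, Qpoly m n p Φ x j ^ κ j) := rfl
  rw [this, coeff_truncP _ _ hs, MvPolynomial.coeff_sum]
  exact Finset.sum_congr rfl fun κ _ => MvPolynomial.coeff_C_mul _ _ _

lemma goodP_Qpoly {m n p : ℕ} (hp : 1 ≤ p) {Ω : Set (Fin m → ℝ)}
    (hfrne : (frontier Ω).Nonempty) {Φ : (Fin m → ℝ) → (Fin n → ℝ)} {CΦ : ℝ} (hCΦ : 0 ≤ CΦ)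
    {x : Fin m → ℝ} (ht : 0 < Metric.infDist x (frontier Ω))
    (hder : ∀ γ : Fin m → ℕ, 1 ≤ deg γ → deg γ ≤ p →
      ‖mD γ Φ x‖ ≤ CΦ / d1 x (frontier Ω) ^ (deg γ - 1))
    (j : Fin n) : GoodP p (Metric.infDist x (frontier Ω)) 1 CΦ (Qpoly m n p Φ x j) := by
  set t := Metric.infDist x (frontier Ω) with htdef
  constructor
  · intro s hs
    rw [Qpoly, coeff_monomial_sum, if_neg]
    intro hmem
    have h1 := (Finset.mem_filter.1 hmem).2
    have h2 : deg ⇑s = ∑ i, s i := rfl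
    omega
  · intro s hsle
    rw [Qpoly, coeff_monomial_sum]
    by_cases hmem : ⇑s ∈ (multiIdx m p).filter (fun γ => 1 ≤ deg γ)
    · obtain ⟨hmem1, hdeg1⟩ := Finset.mem_filter.1 hmem
      rw [if_pos hmem]
      have hdegle : deg ⇑s ≤ p := mem_multiIdx.1 hmem1
      have hb := hder ⇑s hdeg1 hdegle
      rw [d1, if_pos hfrne, ← htdef] at hb
      have hbj : |mD ⇑s Φ x j| ≤ CΦ / t ^ (deg ⇑s - 1) := by
        refine le_trans ?_ hb
        have hpi := norm_le_pi_norm (mD ⇑s Φ x) j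
        simpa [Real.norm_eq_abs] using hpi
      have hfact : |1 / (mfact ⇑s : ℝ)| ≤ 1 := by
        rw [abs_of_nonneg (by positivity)]
        rw [div_le_one (by exact_mod_cast Nat.lt_of_lt_of_le Nat.zero_lt_one (one_le_mfact ⇑s))]
        exact_mod_cast one_le_mfact ⇑s
      calc |(1 / (mfact ⇑s : ℝ)) * mD ⇑s Φ x j|
          = |1 / (mfact ⇑s : ℝ)| * |mD ⇑s Φ x j| := abs_mul _ _
        _ ≤ 1 * (CΦ / t ^ (deg ⇑s - 1)) :=
            mul_le_mul hfact hbj (abs_nonneg _) zero_le_one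
        _ = 1 * t ^ ((1 : ℤ) - (∑ i, s i)) * CΦ := by
            rw [one_mul, one_mul, div_eq_mul_inv]
            rw [mul_comm]
            congr 1
            have h1 : ((1 : ℤ) - (∑ i, s i)) = -((deg ⇑s - 1 : ℕ) : ℤ) := by
              have h2 : deg ⇑s = ∑ i, s i := rfl
              omega
            rw [h1, zpow_neg, zpow_natCast]
        _ = CΦ * t ^ ((1 : ℤ) - (∑ i, s i)) := by ring
    · rw [if_neg hmem, abs_zero]
      exact mul_nonneg hCΦ (zpow_pos ht _).le

lemma goodP_Qpoly_prod {m n p : ℕ} {t : ℝ} (ht : 0 < t) {CΦ : ℝ} (hCΦ : 0 ≤ CΦ)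
    {Qp : Fin n → MvPolynomial (Fin m) ℝ} (hQ : ∀ j, GoodP p t 1 CΦ (Qp j))
    (κ : Fin n → ℕ) (hκ : deg κ ≤ p) :
    GoodP p t (deg κ) ((2 ^ p : ℝ) ^ n * (max ((2 : ℝ) ^ p * CΦ) 1) ^ p)
      (∏ j, Qp j ^ κ j) := by
  have h1 : ∀ j ∈ Finset.univ, GoodP p t (κ j * 1) (((2 : ℝ) ^ p * CΦ) ^ κ j) (Qp j ^ κ j) :=
    fun j _ => goodP_pow ht hCΦ (hQ j) (κ j)
  have h2 := goodP_prod ht Finset.univ (fun j => Qp j ^ κ j) (fun j => κ j * 1)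
    (fun j => ((2 : ℝ) ^ p * CΦ) ^ κ j) (fun j => pow_nonneg (by positivity) _) h1
  have hq : (∑ j, κ j * 1) = deg κ := by simp [deg]
  have hDeq : ((2 : ℝ) ^ p) ^ (Finset.univ : Finset (Fin n)).card
      * ∏ j, ((2 : ℝ) ^ p * CΦ) ^ κ j
      = ((2 : ℝ) ^ p) ^ n * ((2 : ℝ) ^ p * CΦ) ^ (deg κ) := by
    rw [Finset.card_univ, Fintype.card_fin]
    congr 1
    rw [deg]
    exact Finset.prod_pow_eq_pow_sum Finset.univ κ ((2 : ℝ) ^ p * CΦ)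
  rw [hq, hDeq] at h2
  refine goodP_mono ht ?_ h2
  apply mul_le_mul_of_nonneg_left _ (by positivity)
  calc ((2 : ℝ) ^ p * CΦ) ^ (deg κ)
      ≤ (max ((2 : ℝ) ^ p * CΦ) 1) ^ (deg κ) :=
        pow_le_pow_left₀ (by positivity) (le_max_left _ _) _
    _ ≤ (max ((2 : ℝ) ^ p * CΦ) 1) ^ p :=
        pow_le_pow_right₀ (le_max_right _ _) hκ

end MoreAux

set_option maxHeartbeats 1000000 in
/-- **Proposition 4.7.** Let `Φ : Ω → ℝⁿ` be `Λ_p`-regular on an open `Ω ⊆ ℝ^m`, let `A ⊆ Ω`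
be closed in `Ω` and quasi-convex with `cl(A)` and `∂Ω` simply separated, and let `Φb` be the
continuous extension of `Φ|A` to `cl(A)`, `K = Φb(cl(A) \ A)`. Let `B ⊇ Φ(A)` be locally
closed, `r : B → [0,∞)` with `r(y) ≤ C'·d(y, K)`, and let `F` be a `C^p`-Whitney field on `B`
with `F^κ(y) = o(r(y)^(p-|κ|))` as `B ∋ y → b`, for each `b ∈ K`. If `G = F ∘ TΦ`, then for
every `a ∈ cl(A) \ A`: `G^σ(x) = o(r(Φ(x))^(p-|σ|))` as `A ∋ x → a`, for all `|σ| ≤ p`. -/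
theorem comp_whitney_flatness (m n p : ℕ) (hp : 1 ≤ p)
    (Ω : Set (Fin m → ℝ)) (hΩ : IsOpen Ω)
    (Φ : (Fin m → ℝ) → (Fin n → ℝ)) (hΦ : LambdaRegular p Ω Φ)
    (A : Set (Fin m → ℝ)) (hAΩ : A ⊆ Ω) (hAcl : closure A ∩ Ω ⊆ A)
    (hqc : ∃ M > 0, QuasiConvexWith M A)
    (hsep : ∃ M > 0, ∀ x ∈ closure A,
      d1 x (closure A ∩ frontier Ω) ≤ M * d1 x (frontier Ω))
    (Φb : (Fin m → ℝ) → (Fin n → ℝ))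
    (hΦb : ContinuousOn Φb (closure A)) (hΦbA : Set.EqOn Φb Φ A)
    (B : Set (Fin n → ℝ)) (hB : IsLocallyClosed B) (hΦA : Φ '' A ⊆ B)
    (K : Set (Fin n → ℝ)) (hK : K = Φb '' (closure A \ A))
    (r : (Fin n → ℝ) → ℝ) (hr0 : ∀ y ∈ B, 0 ≤ r y)
    (C' : ℝ) (hC' : 0 < C') (hr : ∀ y ∈ B, r y ≤ C' * d1 y K)
    (F : (Fin n → ℕ) → (Fin n → ℝ) → ℝ) (hF : IsWhitneyField n p B F)
    (hflat : ∀ b ∈ K, ∀ κ : Fin n → ℕ, deg κ ≤ p → ∀ ε > 0, ∃ δ > 0,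
      ∀ y ∈ B, dist y b < δ → |F κ y| ≤ ε * r y ^ (p - deg κ))
    (G : (Fin m → ℕ) → (Fin m → ℝ) → ℝ)
    (hG : ∀ σ : Fin m → ℕ, deg σ ≤ p → ∀ x ∈ A,
      G σ x = (mfact σ : ℝ) *
        MvPolynomial.coeff (toFinsupp σ) (compTaylorPoly p F Φ x)) :

    ∀ a ∈ closure A \ A, ∀ σ : Fin m → ℕ, deg σ ≤ p → ∀ ε > 0, ∃ δ > 0,
      ∀ x ∈ A, dist x a < δ → |G σ x| ≤ ε * r (Φ x) ^ (p - deg σ) := by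
  classical
  obtain ⟨hΦsm, CΦ, hCΦ, hder⟩ := hΦ
  obtain ⟨Mq, hMq, hquasi⟩ := hqc
  obtain ⟨Ms, hMs, hsepM⟩ := hsep
  intro a ha σ hσ ε hε
  obtain ⟨hacl, hana⟩ := ha
  -- a lies on the frontier of Ω
  have haΩ : a ∉ Ω := fun h => hana (hAcl ⟨hacl, h⟩)
  have hafr : a ∈ frontier Ω := by
    rw [hΩ.frontier_eq, Set.mem_diff]
    exact ⟨closure_mono hAΩ hacl, haΩ⟩
  have hfrne : (frontier Ω).Nonempty := ⟨a, hafr⟩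
  have haK : Φb a ∈ K := hK ▸ ⟨a, ⟨hacl, hana⟩, rfl⟩
  have hKne : K.Nonempty := ⟨Φb a, haK⟩
  -- differentiability and derivative bounds
  have hdiff : ∀ x ∈ Ω, DifferentiableAt ℝ Φ x := by
    intro x hx
    have h1 : (1 : ℕ∞) ≤ (p : ℕ∞) := by exact_mod_cast hp
    exact ((hΦsm.differentiableOn (by exact_mod_cast (show p ≠ 0 by omega))) x hx).differentiableAt (hΩ.mem_nhds hx)
  have hpd : ∀ x ∈ Ω, ∀ i : Fin m, ‖fderiv ℝ Φ x (Pi.single i 1)‖ ≤ CΦ := by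
    intro x hx i
    have h := hder x hx (Pi.single i 1) (le_of_eq (deg_single i).symm)
      (by rw [deg_single]; exact hp)
    rw [mD_single] at h
    rw [deg_single] at h
    simpa [pd] using h
  set L : ℝ := (m : ℝ) * CΦ with hLdef
  have hL0 : 0 ≤ L := by positivity
  have hfd : ∀ x ∈ Ω, ‖fderiv ℝ Φ x‖ ≤ L := fun x hx => fderiv_opNorm_le hCΦ.le (hpd x hx)
  -- Φ is Lipschitz on A with constant L * Mq
  have hlipA : ∀ x ∈ A, ∀ y ∈ A, dist (Φ x) (Φ y) ≤ L * Mq * dist x y := by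
    intro x hx y hy
    obtain ⟨γ, hγc, hγ0, hγ1, hγA, hγvar⟩ := hquasi x hx y hy
    have hd := dist_images_le_of_curve m n hΩ hdiff hL0 hfd hγc
      (fun t ht => hAΩ (hγA t ht)) (V := Mq * dist x y) (by positivity) hγvar
    calc dist (Φ x) (Φ y) = dist (Φ (γ 0)) (Φ (γ 1)) := by rw [hγ0, hγ1]
      _ ≤ L * (Mq * dist x y) := hd
      _ = L * Mq * dist x y := by ring
  -- extension to closure points
  have hlipb : ∀ x ∈ A, ∀ z ∈ closure A, dist (Φ x) (Φb z) ≤ L * Mq * dist x z := by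
    intro x hx z hz
    have hne : (nhdsWithin z A).NeBot := mem_closure_iff_nhdsWithin_neBot.1 hz
    have h1 : Filter.Tendsto (fun w => dist (Φ x) (Φb w)) (nhdsWithin z A)
        (nhds (dist (Φ x) (Φb z))) :=
      Filter.Tendsto.dist tendsto_const_nhds ((hΦb z hz).mono subset_closure)
    have h2 : Filter.Tendsto (fun w => L * Mq * dist x w) (nhdsWithin z A)
        (nhds (L * Mq * dist x z)) := by
      apply Filter.Tendsto.const_mul
      exact Filter.Tendsto.dist tendsto_const_nhds
        ((continuous_id.tendsto z).mono_left nhdsWithin_le_nhds)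
    refine le_of_tendsto_of_tendsto h1 h2 ?_
    filter_upwards [self_mem_nhdsWithin] with w hw
    rw [hΦbA hw]
    exact hlipA x hx w hw
  -- the key distance estimate:  r (Φ x) ≤ c * infDist x (frontier Ω)
  set c : ℝ := C' * (L * Mq * Ms) with hcdef
  have hc0 : 0 ≤ c := by positivity
  have hrc : ∀ x ∈ A, r (Φ x) ≤ c * Metric.infDist x (frontier Ω) := by
    intro x hx
    have hSne : (closure A ∩ frontier Ω).Nonempty := ⟨a, hacl, hafr⟩
    have hScl : IsClosed (closure A ∩ frontier Ω) := isClosed_closure.inter isClosed_frontier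
    obtain ⟨z, hzS, hzd⟩ := hScl.exists_infDist_eq_dist hSne x
    have hzΩ : z ∉ Ω := by
      have := hzS.2
      rw [hΩ.frontier_eq, Set.mem_diff] at this
      exact this.2
    have hzA : z ∉ A := fun h => hzΩ (hAΩ h)
    have hΦbz : Φb z ∈ K := hK ▸ ⟨z, ⟨hzS.1, hzA⟩, rfl⟩
    have hxB : Φ x ∈ B := hΦA ⟨x, hx, rfl⟩
    have h1 : Metric.infDist (Φ x) K ≤ L * Mq * Metric.infDist x (closure A ∩ frontier Ω) := by
      rw [hzd]
      exact (Metric.infDist_le_dist_of_mem hΦbz).trans (hlipb x hx z hzS.1)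
    have h2 : Metric.infDist x (closure A ∩ frontier Ω) ≤ Ms * Metric.infDist x (frontier Ω) := by
      have := hsepM x (subset_closure hx)
      rwa [d1, if_pos hSne, d1, if_pos hfrne] at this
    calc r (Φ x) ≤ C' * d1 (Φ x) K := hr _ hxB
      _ = C' * Metric.infDist (Φ x) K := by rw [d1, if_pos hKne]
      _ ≤ C' * (L * Mq * (Ms * Metric.infDist x (frontier Ω))) := by
          apply mul_le_mul_of_nonneg_left _ hC'.le
          refine h1.trans ?_
          apply mul_le_mul_of_nonneg_left h2 (by positivity)
      _ = c * Metric.infDist x (frontier Ω) := by rw [hcdef]; ring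
  -- positivity of the distance to the frontier on A
  have htpos : ∀ x ∈ A, 0 < Metric.infDist x (frontier Ω) := by
    intro x hx
    have hxfr : x ∉ frontier Ω := by
      rw [hΩ.frontier_eq, Set.mem_diff]
      exact fun h => h.2 (hAΩ hx)
    exact (isClosed_frontier.notMem_iff_infDist_pos hfrne).1 hxfr
  -- Good bounds for the inner polynomials
  have hQgood : ∀ x ∈ A, ∀ j : Fin n,
      GoodP p (Metric.infDist x (frontier Ω)) 1 CΦ (Qpoly m n p Φ x j) := by
    intro x hx j
    exact goodP_Qpoly hp hfrne hCΦ.le (htpos x hx)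
      (fun γ h1 h2 => hder x (hAΩ hx) γ h1 h2) j
  set D₀ : ℝ := (2 ^ p : ℝ) ^ n * (max ((2 : ℝ) ^ p * CΦ) 1) ^ p with hD₀def
  have hD₀pos : 0 < D₀ := by
    rw [hD₀def]; positivity
  have hsum_s : (∑ i, (toFinsupp σ) i) = deg σ := sum_toFinsupp σ
  -- constants
  set cmax : ℝ := max c 1 with hcmaxdef
  have hcmax1 : (1 : ℝ) ≤ cmax := le_max_right _ _
  have hcmax0 : (0 : ℝ) < cmax := lt_of_lt_of_le one_pos hcmax1
  have hMIne : (multiIdx n p).Nonempty := ⟨0, mem_multiIdx.2 (by simp [deg])⟩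
  have hmσ : (0 : ℝ) < (mfact σ : ℝ) := by
    exact_mod_cast Nat.lt_of_lt_of_le Nat.zero_lt_one (one_le_mfact σ)
  have hcard : (0 : ℝ) < ((multiIdx n p).card : ℝ) := by
    exact_mod_cast Finset.card_pos.2 hMIne
  set Cden : ℝ := (mfact σ : ℝ) * ((multiIdx n p).card : ℝ) * (D₀ * cmax ^ p) with hCdendef
  have hCden0 : 0 < Cden := by
    rw [hCdendef]
    have : (0 : ℝ) < D₀ * cmax ^ p := by positivity
    positivity
  set ε' : ℝ := ε / Cden with hε'def
  have hε' : 0 < ε' := div_pos hε hCden0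
  -- uniform flatness radius over the finitely many κ
  have hflatchoice : ∀ κ : Fin n → ℕ, κ ∈ multiIdx n p → ∃ δ > 0,
      ∀ y ∈ B, dist y (Φb a) < δ → |F κ y| ≤ ε' * r y ^ (p - deg κ) :=
    fun κ hκ => hflat (Φb a) haK κ (mem_multiIdx.1 hκ) ε' hε'
  choose! δf hδf hFb using hflatchoice
  set δ₁ : ℝ := (multiIdx n p).inf' hMIne δf with hδ₁def
  have hδ₁pos : 0 < δ₁ := by
    rw [hδ₁def, Finset.lt_inf'_iff]
    exact fun κ hκ => hδf κ hκ
  -- continuity of Φb at a gives the final δ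
  have hcont : ContinuousWithinAt Φb (closure A) a := hΦb a hacl
  rw [Metric.continuousWithinAt_iff] at hcont
  obtain ⟨δ, hδpos, hδ⟩ := hcont δ₁ hδ₁pos
  refine ⟨δ, hδpos, ?_⟩
  intro x hx hxd
  set t : ℝ := Metric.infDist x (frontier Ω) with htdef
  have ht : 0 < t := htpos x hx
  have hxB : Φ x ∈ B := hΦA ⟨x, hx, rfl⟩
  have hrx0 : 0 ≤ r (Φ x) := hr0 _ hxB
  have hrt : r (Φ x) ≤ c * t := hrc x hx
  have hΦxd : dist (Φ x) (Φb a) < δ₁ := by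
    have h := hδ (subset_closure hx) hxd
    rwa [hΦbA hx] at h
  have hflatx : ∀ κ ∈ multiIdx n p, |F κ (Φ x)| ≤ ε' * r (Φ x) ^ (p - deg κ) := by
    intro κ hκ
    exact hFb κ hκ _ hxB (lt_of_lt_of_le hΦxd (Finset.inf'_le δf hκ))
  -- termwise estimate
  have hterm : ∀ κ ∈ multiIdx n p,
      |(1 / (mfact κ : ℝ)) * F κ (Φ x)
          * MvPolynomial.coeff (toFinsupp σ) (∏ j, Qpoly m n p Φ x j ^ κ j)|
        ≤ ε' * (D₀ * cmax ^ p) * r (Φ x) ^ (p - deg σ) := by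
    intro κ hκ
    have hκp : deg κ ≤ p := mem_multiIdx.1 hκ
    have hPg := goodP_Qpoly_prod ht hCΦ.le (hQgood x hx) κ hκp
    by_cases hks : deg κ ≤ deg σ
    · set e : ℕ := deg σ - deg κ with hedef
      have hpk : p - deg κ = (p - deg σ) + e := by omega
      have hre : r (Φ x) ^ e ≤ (cmax * t) ^ e := by
        apply pow_le_pow_left₀ hrx0
        exact hrt.trans (mul_le_mul_of_nonneg_right (le_max_left c 1) ht.le)
      have hFx : |F κ (Φ x)| ≤ ε' * (r (Φ x) ^ (p - deg σ) * (cmax * t) ^ e) := by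
        refine (hflatx κ hκ).trans ?_
        rw [hpk, pow_add]
        exact mul_le_mul_of_nonneg_left
          (mul_le_mul_of_nonneg_left hre (pow_nonneg hrx0 _)) hε'.le
      have hcoe : |MvPolynomial.coeff (toFinsupp σ) (∏ j, Qpoly m n p Φ x j ^ κ j)|
          ≤ D₀ * (t ^ e)⁻¹ := by
        have hb := hPg.2 (toFinsupp σ) (hsum_s ▸ hσ)
        rw [hsum_s] at hb
        have hz : t ^ ((deg κ : ℤ) - (deg σ : ℤ)) = (t ^ e)⁻¹ := by
          have h1 : ((deg κ : ℤ) - (deg σ : ℤ)) = -(e : ℤ) := by omega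
          rw [h1, zpow_neg, zpow_natCast]
        rwa [hz] at hb
      have hfac : |1 / (mfact κ : ℝ)| ≤ 1 := by
        rw [abs_of_nonneg (by positivity)]
        rw [div_le_one (by exact_mod_cast Nat.lt_of_lt_of_le Nat.zero_lt_one (one_le_mfact κ))]
        exact_mod_cast one_le_mfact κ
      have htne : (t : ℝ) ^ e ≠ 0 := pow_ne_zero _ (ne_of_gt ht)
      calc |(1 / (mfact κ : ℝ)) * F κ (Φ x)
          * MvPolynomial.coeff (toFinsupp σ) (∏ j, Qpoly m n p Φ x j ^ κ j)|
          = |1 / (mfact κ : ℝ)| * |F κ (Φ x)|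
            * |MvPolynomial.coeff (toFinsupp σ) (∏ j, Qpoly m n p Φ x j ^ κ j)| := by
            rw [abs_mul, abs_mul]
        _ ≤ 1 * (ε' * (r (Φ x) ^ (p - deg σ) * (cmax * t) ^ e)) * (D₀ * (t ^ e)⁻¹) := by
            apply mul_le_mul _ hcoe (abs_nonneg _)
            · positivity
            · exact mul_le_mul hfac hFx (abs_nonneg _) zero_le_one
        _ = ε' * (D₀ * cmax ^ e) * r (Φ x) ^ (p - deg σ) := by
            rw [mul_pow]
            field_simp
        _ ≤ ε' * (D₀ * cmax ^ p) * r (Φ x) ^ (p - deg σ) := by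
            apply mul_le_mul_of_nonneg_right _ (pow_nonneg hrx0 _)
            apply mul_le_mul_of_nonneg_left _ hε'.le
            exact mul_le_mul_of_nonneg_left
              (pow_le_pow_right₀ hcmax1 (by omega)) hD₀pos.le
    · have h0 : MvPolynomial.coeff (toFinsupp σ) (∏ j, Qpoly m n p Φ x j ^ κ j) = 0 := by
        apply hPg.1
        rw [hsum_s]
        omega
      rw [h0, mul_zero, abs_zero]
      positivity
  -- put everything together
  rw [hG σ hσ x hx, coeff_compTaylorPoly p F Φ x (toFinsupp σ) (hsum_s ▸ hσ), abs_mul,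
    abs_of_nonneg hmσ.le]
  have hsum_le : |∑ κ ∈ multiIdx n p, (1 / (mfact κ : ℝ)) * F κ (Φ x)
        * MvPolynomial.coeff (toFinsupp σ) (∏ j, Qpoly m n p Φ x j ^ κ j)|
      ≤ ((multiIdx n p).card : ℝ) * (ε' * (D₀ * cmax ^ p) * r (Φ x) ^ (p - deg σ)) := by
    refine (Finset.abs_sum_le_sum_abs _ _).trans ?_
    refine (Finset.sum_le_card_nsmul _ _ _ hterm).trans ?_
    rw [nsmul_eq_mul]
  calc (mfact σ : ℝ) * |∑ κ ∈ multiIdx n p, (1 / (mfact κ : ℝ)) * F κ (Φ x)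
        * MvPolynomial.coeff (toFinsupp σ) (∏ j, Qpoly m n p Φ x j ^ κ j)|
      ≤ (mfact σ : ℝ) * (((multiIdx n p).card : ℝ)
          * (ε' * (D₀ * cmax ^ p) * r (Φ x) ^ (p - deg σ))) :=
        mul_le_mul_of_nonneg_left hsum_le hmσ.le
    _ = ε' * Cden * r (Φ x) ^ (p - deg σ) := by rw [hCdendef]; ring
    _ = ε * r (Φ x) ^ (p - deg σ) := by
        rw [hε'def, div_mul_cancel₀ _ (ne_of_gt hCden0)]
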